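/- arXiv:2203.09710 — 4 statements merged into one kernel-verified Lean document; each statement's English description precedes it below -/
import Mathlib

section
/- Under the hypotheses of the projection formula f(x) = f̂(x) − (ReLU(L_{f̂+gα}V(x) + W(x))/‖∇V(x)‖²)∇V(x), with V continuously differentiable, positive definite, radially unbounded, W continuous and positive definite, and the closed-loop vector field f + gα locally Lipschitz with f(0) + g(0)α(0) = 0, the origin of ẋ = f(x) + g(x)α(x) is globally asymptotically stable. -/
/-!
The correction term is the projection that makes `f + gα` satisfy the decrease condition:
`⟪∇V, f + gα⟫ = min ⟪∇V, f̂ + gα⟫ (-W) ≤ -W` away from the origin, while `∇V 0 = 0` because `V`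
is minimal at `0`. So `V` is a strict Lyapunov function, and Lyapunov's direct method applies.
Radial unboundedness makes the sublevel sets of `V` compact, hence `V` is bounded below by a
positive constant outside every ball. Since `V` does not increase along trajectories this gives
stability. If `V (x t)` stayed above some `η > 0`, the trajectory would stay in the compact set
`{η ≤ V ≤ V (x 0)}`, which avoids the origin, so `W ≥ μ > 0` there and `V (x t) ≤ V (x 0) - μ t`,
which is absurd; hence `V (x t) → 0`, and so `x t → 0`.
-/

open scoped RealInnerProductSpace
open Filter Topology

theorem inner_sub_max_div_norm_sq_smul_le {E : Type*} [NormedAddCommGroup E]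
    [InnerProductSpace ℝ E] {p : E} (hp : p ≠ 0) (b : E) (w : ℝ) :
    ⟪p, b - (max (⟪p, b⟫ + w) 0 / ‖p‖ ^ 2) • p⟫ ≤ -w := by
  have hp2 : ‖p‖ ^ 2 ≠ 0 := pow_ne_zero 2 (norm_ne_zero_iff.mpr hp)
  rw [inner_sub_right, real_inner_smul_right, real_inner_self_eq_norm_sq, div_mul_cancel₀ _ hp2]
  linarith [le_max_left (⟪p, b⟫ + w) 0]

theorem sub_le_mul_sub_of_hasDerivAt_le {v v' : ℝ → ℝ} {C : ℝ}
    (hv : ∀ t, 0 ≤ t → HasDerivAt v (v' t) t) (hle : ∀ t, 0 ≤ t → v' t ≤ C)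
    {a b : ℝ} (ha : 0 ≤ a) (hab : a ≤ b) : v b - v a ≤ C * (b - a) := by
  refine (convex_Ici 0).image_sub_le_mul_sub_of_deriv_le
    (fun t ht => (hv t ht).continuousAt.continuousWithinAt) (fun t ht => ?_) (fun t ht => ?_)
    a ha b (ha.trans hab) hab
  · rw [interior_Ici] at ht
    exact (hv t (le_of_lt ht)).differentiableAt.differentiableWithinAt
  · rw [interior_Ici] at ht
    exact (hv t (le_of_lt ht)).deriv ▸ hle t (le_of_lt ht)

theorem isCompact_setOf_le_of_tendsto_cocompact {X : Type*} [TopologicalSpace X] {V : X → ℝ}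
    (hV : Continuous V)
    (hVrad : Tendsto V (cocompact X) atTop) (c : ℝ) : IsCompact {y | V y ≤ c} := by
  obtain ⟨K, hK, hKV⟩ := mem_cocompact.mp (hVrad (eventually_gt_atTop c))
  refine hK.of_isClosed_subset (isClosed_le hV continuous_const) fun y hy => ?_
  by_contra hyK
  exact (hKV hyK).not_ge (show V y ≤ c from hy)

theorem nonneg_of_pos_of_ne_zero {X : Type*} [Zero X] {V : X → ℝ} (hV0 : V 0 = 0)
    (hVpos : ∀ y, y ≠ 0 → 0 < V y) (y : X) : 0 ≤ V y := by
  rcases eq_or_ne y 0 with rfl | hy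
  · exact hV0.ge
  · exact (hVpos y hy).le

section Lyapunov

variable {E : Type*} [NormedAddCommGroup E] {V W : E → ℝ} {F : E → E}

theorem exists_pos_forall_le_of_le_norm (hV : Continuous V) (hVpos : ∀ y, y ≠ 0 → 0 < V y)
    (hVrad : Tendsto V (cocompact E) atTop) {ε : ℝ} (hε : 0 < ε) :
    ∃ m > 0, ∀ y, ε ≤ ‖y‖ → m ≤ V y := by
  have hS : IsCompact ({y | V y ≤ 1} ∩ {y | ε ≤ ‖y‖}) :=
    (isCompact_setOf_le_of_tendsto_cocompact hV hVrad 1).inter_right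
      (isClosed_le continuous_const continuous_norm)
  obtain ⟨m, hm, hmS⟩ := hS.exists_forall_le' hV.continuousOn fun y hy =>
    hVpos y (norm_pos_iff.mp (hε.trans_le hy.2))
  refine ⟨min m 1, lt_min hm one_pos, fun y hy => ?_⟩
  rcases le_or_gt (V y) 1 with hy1 | hy1
  · exact (min_le_left _ _).trans (hmS y ⟨hy1, hy⟩)
  · exact (min_le_right _ _).trans hy1.le

theorem tendsto_nhds_zero_of_tendsto_comp {α : Type*} {l : Filter α} {x : α → E}
    (hV : Continuous V) (hVpos : ∀ y, y ≠ 0 → 0 < V y) (hVrad : Tendsto V (cocompact E) atTop)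
    (h : Tendsto (fun t => V (x t)) l (𝓝 0)) : Tendsto x l (𝓝 0) := by
  rw [Metric.tendsto_nhds]
  intro ε hε
  obtain ⟨m, hm, hmV⟩ := exists_pos_forall_le_of_le_norm hV hVpos hVrad hε
  filter_upwards [h.eventually (gt_mem_nhds hm)] with t ht
  rw [dist_zero_right]
  by_contra! hxt
  exact (hmV _ hxt).not_gt ht

variable [NormedSpace ℝ E]

def IsForwardTrajectory (F : E → E) (x : ℝ → E) : Prop :=
  ∀ t, 0 ≤ t → HasDerivAt x (F (x t)) t

theorem IsForwardTrajectory.sub_le_mul_sub {x : ℝ → E} (hx : IsForwardTrajectory F x)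
    (hV : Differentiable ℝ V) {C : ℝ} (hle : ∀ t, 0 ≤ t → fderiv ℝ V (x t) (F (x t)) ≤ C)
    {a b : ℝ} (ha : 0 ≤ a) (hab : a ≤ b) : V (x b) - V (x a) ≤ C * (b - a) :=
  sub_le_mul_sub_of_hasDerivAt_le (v := fun t => V (x t))
    (fun t ht => (hV (x t)).hasFDerivAt.comp_hasDerivAt t (hx t ht)) hle ha hab

theorem IsForwardTrajectory.comp_le {x : ℝ → E} (hx : IsForwardTrajectory F x)
    (hV : Differentiable ℝ V) (hVdot : ∀ y, fderiv ℝ V y (F y) ≤ 0)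
    {a b : ℝ} (ha : 0 ≤ a) (hab : a ≤ b) : V (x b) ≤ V (x a) := by
  linarith [hx.sub_le_mul_sub hV (fun t _ => hVdot (x t)) ha hab]

theorem fderiv_apply_nonpos_of_lyapunov (hV0 : V 0 = 0) (hVpos : ∀ y, y ≠ 0 → 0 < V y)
    (hWpos : ∀ y, y ≠ 0 → 0 < W y) (hVdot : ∀ y, y ≠ 0 → fderiv ℝ V y (F y) ≤ -W y) (y : E) :
    fderiv ℝ V y (F y) ≤ 0 := by
  rcases eq_or_ne y 0 with rfl | hy
  · have hmin : IsLocalMin V 0 :=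
      Eventually.of_forall fun z => hV0 ▸ nonneg_of_pos_of_ne_zero hV0 hVpos z
    simp [hmin.fderiv_eq_zero]
  · linarith [hVdot y hy, hWpos y hy]

theorem lyapunov_stable (hV : Differentiable ℝ V) (hV0 : V 0 = 0)
    (hVpos : ∀ y, y ≠ 0 → 0 < V y) (hVrad : Tendsto V (cocompact E) atTop)
    (hVdot : ∀ y, fderiv ℝ V y (F y) ≤ 0) :
    ∀ ε > (0 : ℝ), ∃ δ > (0 : ℝ), ∀ x : ℝ → E,
      IsForwardTrajectory F x → ‖x 0‖ < δ → ∀ t, 0 ≤ t → ‖x t‖ < ε := by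
  intro ε hε
  obtain ⟨m, hm, hmV⟩ := exists_pos_forall_le_of_le_norm hV.continuous hVpos hVrad hε
  obtain ⟨δ, hδ, hδV⟩ := Metric.continuousAt_iff.mp hV.continuous.continuousAt m hm
  refine ⟨δ, hδ, fun x hx hx0 t ht => ?_⟩
  have hVx0 : V (x 0) < m := by
    have := hδV (x := x 0) (by rwa [dist_zero_right])
    rw [Real.dist_eq, hV0, sub_zero] at this
    exact (le_abs_self _).trans_lt this
  by_contra! hxt
  exact ((hmV _ hxt).trans (hx.comp_le hV hVdot le_rfl ht)).not_gt hVx0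

theorem IsForwardTrajectory.exists_comp_lt {x : ℝ → E} (hx : IsForwardTrajectory F x)
    (hV : Differentiable ℝ V) (hV0 : V 0 = 0) (hVrad : Tendsto V (cocompact E) atTop)
    (hW : Continuous W) (hWpos : ∀ y, y ≠ 0 → 0 < W y)
    (hVdot : ∀ y, y ≠ 0 → fderiv ℝ V y (F y) ≤ -W y) (hVdot' : ∀ y, fderiv ℝ V y (F y) ≤ 0)
    {η : ℝ} (hη : 0 < η) : ∃ t, 0 ≤ t ∧ V (x t) < η := by
  by_contra! hxη
  set S := {y | η ≤ V y} ∩ {y | V y ≤ V (x 0)}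
  have hne : ∀ y ∈ S, y ≠ 0 := fun y hy h0 => by
    have : η ≤ V y := hy.1
    rw [h0, hV0] at this
    linarith
  have hS : IsCompact S :=
    (isCompact_setOf_le_of_tendsto_cocompact hV.continuous hVrad _).inter_left
      (isClosed_le continuous_const hV.continuous)
  obtain ⟨μ, hμ, hμW⟩ := hS.exists_forall_le' hW.continuousOn fun y hy => hWpos y (hne y hy)
  have hxS : ∀ t, 0 ≤ t → x t ∈ S := fun t ht => ⟨hxη t ht, hx.comp_le hV hVdot' le_rfl ht⟩
  set T := V (x 0) / μ + 1
  have hT : 0 ≤ T := by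
    have := div_nonneg (hη.le.trans (hxη 0 le_rfl)) hμ.le
    linarith
  have hdecay : V (x T) - V (x 0) ≤ -μ * (T - 0) :=
    hx.sub_le_mul_sub hV (fun s hs => (hVdot _ (hne _ (hxS s hs))).trans
      (neg_le_neg (hμW _ (hxS s hs)))) le_rfl hT
  have hμT : -μ * (T - 0) = -(V (x 0) + μ) := by
    rw [sub_zero, neg_mul, mul_add, mul_one, mul_div_cancel₀ _ hμ.ne']
  linarith [hxη _ hT]

theorem IsForwardTrajectory.tendsto_comp_nhds_zero {x : ℝ → E} (hx : IsForwardTrajectory F x)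
    (hV : Differentiable ℝ V) (hV0 : V 0 = 0) (hVpos : ∀ y, y ≠ 0 → 0 < V y)
    (hVrad : Tendsto V (cocompact E) atTop) (hW : Continuous W) (hWpos : ∀ y, y ≠ 0 → 0 < W y)
    (hVdot : ∀ y, y ≠ 0 → fderiv ℝ V y (F y) ≤ -W y) :
    Tendsto (fun t => V (x t)) atTop (𝓝 0) := by
  have hVdot' := fderiv_apply_nonpos_of_lyapunov hV0 hVpos hWpos hVdot
  refine tendsto_order.2 ⟨fun a ha =>
    Eventually.of_forall fun t => ha.trans_le (nonneg_of_pos_of_ne_zero hV0 hVpos _),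
    fun η hη => ?_⟩
  obtain ⟨t₀, ht₀, hxt₀⟩ := hx.exists_comp_lt hV hV0 hVrad hW hWpos hVdot hVdot' hη
  filter_upwards [eventually_ge_atTop t₀] with t ht
  exact (hx.comp_le hV hVdot' ht₀ ht).trans_lt hxt₀

theorem lyapunov_globallyAsymptoticallyStable (hV : Differentiable ℝ V) (hV0 : V 0 = 0)
    (hVpos : ∀ y, y ≠ 0 → 0 < V y) (hVrad : Tendsto V (cocompact E) atTop)
    (hW : Continuous W) (hWpos : ∀ y, y ≠ 0 → 0 < W y)
    (hVdot : ∀ y, y ≠ 0 → fderiv ℝ V y (F y) ≤ -W y) :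
    (∀ ε > (0 : ℝ), ∃ δ > (0 : ℝ), ∀ x : ℝ → E,
      IsForwardTrajectory F x → ‖x 0‖ < δ → ∀ t, 0 ≤ t → ‖x t‖ < ε) ∧
    (∀ x : ℝ → E, IsForwardTrajectory F x → Tendsto x atTop (𝓝 0)) :=
  ⟨lyapunov_stable hV hV0 hVpos hVrad (fderiv_apply_nonpos_of_lyapunov hV0 hVpos hWpos hVdot),
    fun _ hx => tendsto_nhds_zero_of_tendsto_comp hV.continuous hVpos hVrad
      (hx.tendsto_comp_nhds_zero hV hV0 hVpos hVrad hW hWpos hVdot)⟩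

end Lyapunov

theorem learned_closed_loop_GAS_general {n m : ℕ}
    (V : EuclideanSpace ℝ (Fin n) → ℝ) (hV : ContDiff ℝ 1 V)
    (hV0 : V 0 = 0) (hVpos : ∀ x, x ≠ 0 → 0 < V x)
    (hVrad : Tendsto V (cocompact (EuclideanSpace ℝ (Fin n))) atTop)
    (W : EuclideanSpace ℝ (Fin n) → ℝ) (hW : Continuous W)
    (hWpos : ∀ x, x ≠ 0 → 0 < W x)
    (fhat : EuclideanSpace ℝ (Fin n) → EuclideanSpace ℝ (Fin n))
    (α : EuclideanSpace ℝ (Fin n) → EuclideanSpace ℝ (Fin m))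
    (g : EuclideanSpace ℝ (Fin n) → EuclideanSpace ℝ (Fin m) →L[ℝ] EuclideanSpace ℝ (Fin n))
    (hgrad : ∀ x, x ≠ 0 → gradient V x ≠ 0)
    (f : EuclideanSpace ℝ (Fin n) → EuclideanSpace ℝ (Fin n))
    (hf : ∀ x, x ≠ 0 → f x = fhat x -
      (max (⟪gradient V x, fhat x + g x (α x)⟫ + W x) 0 / ‖gradient V x‖ ^ 2) • gradient V x)
    (F : EuclideanSpace ℝ (Fin n) → EuclideanSpace ℝ (Fin n))
    (hF : ∀ x, F x = f x + g x (α x)) :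
    (∀ ε > (0 : ℝ), ∃ δ > (0 : ℝ), ∀ x : ℝ → EuclideanSpace ℝ (Fin n),
      (∀ t, 0 ≤ t → HasDerivAt x (F (x t)) t) → ‖x 0‖ < δ → ∀ t, 0 ≤ t → ‖x t‖ < ε) ∧
    (∀ x : ℝ → EuclideanSpace ℝ (Fin n),
      (∀ t, 0 ≤ t → HasDerivAt x (F (x t)) t) → Tendsto x atTop (nhds 0)) := by
  have hVdot : ∀ y, y ≠ 0 → fderiv ℝ V y (F y) ≤ -W y := by
    intro y hy
    have hFy : F y = (fhat y + g y (α y)) -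
        (max (⟪gradient V y, fhat y + g y (α y)⟫ + W y) 0 / ‖gradient V y‖ ^ 2) •
          gradient V y := by
      rw [hF, hf y hy]
      abel
    rw [← InnerProductSpace.toDual_symm_apply, hFy]
    exact inner_sub_max_div_norm_sq_smul_le (hgrad y hy) _ _
  exact lyapunov_globallyAsymptoticallyStable (hV.differentiable one_ne_zero) hV0 hVpos hVrad hW
    hWpos hVdot

theorem learned_closed_loop_GAS {n m : ℕ}
    (V : EuclideanSpace ℝ (Fin n) → ℝ) (hV : ContDiff ℝ 1 V)
    (hV0 : V 0 = 0) (hVpos : ∀ x, x ≠ 0 → 0 < V x)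
    (hVrad : Tendsto V (cocompact (EuclideanSpace ℝ (Fin n))) atTop)
    (W : EuclideanSpace ℝ (Fin n) → ℝ) (hW : Continuous W)
    (hW0 : W 0 = 0) (hWpos : ∀ x, x ≠ 0 → 0 < W x)
    (fhat : EuclideanSpace ℝ (Fin n) → EuclideanSpace ℝ (Fin n))
    (α : EuclideanSpace ℝ (Fin n) → EuclideanSpace ℝ (Fin m))
    (g : EuclideanSpace ℝ (Fin n) → EuclideanSpace ℝ (Fin m) →L[ℝ] EuclideanSpace ℝ (Fin n))
    (hgrad : ∀ x, x ≠ 0 → gradient V x ≠ 0)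
    (f : EuclideanSpace ℝ (Fin n) → EuclideanSpace ℝ (Fin n))
    (hf : ∀ x, x ≠ 0 → f x = fhat x -
      (max (⟪gradient V x, fhat x + g x (α x)⟫ + W x) 0 / ‖gradient V x‖ ^ 2) • gradient V x)
    (F : EuclideanSpace ℝ (Fin n) → EuclideanSpace ℝ (Fin n))
    (hF : ∀ x, F x = f x + g x (α x))
    (hFlip : LocallyLipschitz F) (hF0 : F 0 = 0) :
    (∀ ε > (0 : ℝ), ∃ δ > (0 : ℝ), ∀ x : ℝ → EuclideanSpace ℝ (Fin n),
      (∀ t, 0 ≤ t → HasDerivAt x (F (x t)) t) → ‖x 0‖ < δ → ∀ t, 0 ≤ t → ‖x t‖ < ε) ∧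
    (∀ x : ℝ → EuclideanSpace ℝ (Fin n),
      (∀ t, 0 ≤ t → HasDerivAt x (F (x t)) t) → Tendsto x atTop (nhds 0)) :=
  learned_closed_loop_GAS_general V hV hV0 hVpos hVrad W hW hWpos fhat α g hgrad f hf F hF
end

section
/- Let V(x) = σ_k(γ(x) − γ(0)) + ε‖x‖² where γ is the ICNN defined by z₁ = σ₀(w₀x + b₀), z_{i+1} = σ_i(v_i z_i + w_i x + b_i), γ(x) = z_k, with each activation σ_i being 1-Lipschitz. Then whenever V is differentiable at x, ‖∇V(x)‖ ≤ 2ε‖x‖ + Σ_{i=0}^{k−1} (Π_{j=i+1}^{k−1} ‖v_j‖) ‖w_i‖. -/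
/-! Each layer composes a 1-Lipschitz activation with an affine map, so `z i` is Lipschitz with
constant `Lᵢ`, where `L₁ = ‖w₀‖` and `L_{m+1} = v_m L_m + ‖w_m‖`; unrolled, `L_k` is the sum of
products in the bound. Hence `V - ε‖·‖²` is `L_k`-Lipschitz, so wherever `V` has gradient `G`, the
derivative `G - 2εx` of that function has norm at most `L_k`. -/

open scoped RealInnerProductSpace NNReal
open Finset

section

variable {E : Type*} [NormedAddCommGroup E]

def icnnLipConst (v : ℕ → ℝ≥0) (w : ℕ → E) (m : ℕ) : ℝ≥0 :=
  ∑ i ∈ range m, (∏ j ∈ Ico (i + 1) m, v j) * ‖w i‖₊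

theorem icnnLipConst_succ (v : ℕ → ℝ≥0) (w : ℕ → E) (m : ℕ) :
    icnnLipConst v w (m + 1) = v m * icnnLipConst v w m + ‖w m‖₊ := by
  simp only [icnnLipConst, sum_range_succ, Ico_self, prod_empty, one_mul, mul_sum]
  congr 1
  refine sum_congr rfl fun i hi => ?_
  rw [prod_Ico_succ_top (by simpa using hi), mul_comm _ (v m), mul_assoc]

end

section

variable {E : Type*} [NormedAddCommGroup E] [InnerProductSpace ℝ E]

theorem LipschitzWith.comp_mul_add_inner_add {σ : ℝ → ℝ} (hσ : LipschitzWith 1 σ) {g : E → ℝ}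
    {K : ℝ≥0} (hg : LipschitzWith K g) (v : ℝ≥0) (w : E) (b : ℝ) :
    LipschitzWith (v * K + ‖w‖₊) fun x => σ (v * g x + ⟪w, x⟫ + b) := by
  have hv : LipschitzWith (v * K) fun x => (v : ℝ) * g x := by
    simpa [Function.comp_def] using (lipschitzWith_smul (v : ℝ)).comp hg
  have hw : ‖innerSL ℝ w‖₊ = ‖w‖₊ := NNReal.eq (innerSL_apply_norm ℝ w)
  simpa [Function.comp_def, hw] using
    hσ.comp ((hv.add (innerSL ℝ w).lipschitz).add (LipschitzWith.const b))

theorem icnn_layer_lipschitzWith {k : ℕ} {σ : ℕ → ℝ → ℝ} (hσ : ∀ i, LipschitzWith 1 (σ i))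
    {w : ℕ → E} {v : ℕ → ℝ≥0} {b : ℕ → ℝ} {z : ℕ → E → ℝ}
    (hz1 : ∀ x, z 1 x = σ 0 (⟪w 0, x⟫ + b 0))
    (hzs : ∀ i, 1 ≤ i → i < k → ∀ x, z (i + 1) x = σ i (v i * z i x + ⟪w i, x⟫ + b i)) :
    ∀ i, 1 ≤ i → i ≤ k → LipschitzWith (icnnLipConst v w i) (z i) := by
  intro i hi
  induction i, hi using Nat.le_induction with
  | base =>
    intro _
    rw [funext hz1]
    simpa [icnnLipConst] using
      (hσ 0).comp_mul_add_inner_add (LipschitzWith.const 0) 0 (w 0) (b 0)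
  | succ i hi ih =>
    intro hik
    rw [funext (hzs i hi hik), icnnLipConst_succ]
    exact (hσ i).comp_mul_add_inner_add (ih (Nat.le_of_succ_le hik)) (v i) (w i) (b i)

end

theorem norm_le_of_hasGradientAt_add_mul_norm_sq {F : Type*} [NormedAddCommGroup F]
    [InnerProductSpace ℝ F] [CompleteSpace F] {g : F → ℝ} {K : ℝ≥0} (hg : LipschitzWith K g)
    {ε : ℝ} (hε : 0 ≤ ε) {x G : F} (hG : HasGradientAt (fun y => g y + ε * ‖y‖ ^ 2) G x) :
    ‖G‖ ≤ 2 * ε * ‖x‖ + K := by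
  set q := (2 * ε) • innerSL ℝ x
  have hq : HasFDerivAt (fun y : F => ε * ‖y‖ ^ 2) q x := by
    have h := (hasStrictFDerivAt_norm_sq x).hasFDerivAt.const_mul ε
    rwa [show ε • (2 : ℕ) • innerSL ℝ x = q by ext; simp [q]; ring] at h
  have hgq := (hG.hasFDerivAt.sub hq).congr_of_eventuallyEq (f₁ := g) (.of_forall fun y => by simp)
  have hq_norm : ‖q‖ = 2 * ε * ‖x‖ := by
    simp [q, norm_smul, abs_of_nonneg hε]
  calc ‖G‖ = ‖InnerProductSpace.toDual ℝ F G - q + q‖ := by simp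
    _ ≤ K + 2 * ε * ‖x‖ :=
      (norm_add_le _ _).trans (by rw [hq_norm]; gcongr; exact hgq.le_of_lipschitz hg)
    _ = 2 * ε * ‖x‖ + K := add_comm _ _

theorem ICNN_gradient_bound {n : ℕ} (k : ℕ) (hk : 1 ≤ k)
    (σ : ℕ → ℝ → ℝ) (hσ : ∀ i, LipschitzWith 1 (σ i))
    (w : ℕ → EuclideanSpace ℝ (Fin n)) (v : ℕ → ℝ) (hv : ∀ j, 0 < v j) (b : ℕ → ℝ)
    (ε : ℝ) (hε : 0 < ε)
    (z : ℕ → EuclideanSpace ℝ (Fin n) → ℝ)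
    (hz1 : ∀ x, z 1 x = σ 0 (⟪w 0, x⟫ + b 0))
    (hzs : ∀ i, 1 ≤ i → i < k → ∀ x, z (i + 1) x = σ i (v i * z i x + ⟪w i, x⟫ + b i))
    (γ : EuclideanSpace ℝ (Fin n) → ℝ) (hγ : ∀ x, γ x = z k x)
    (V : EuclideanSpace ℝ (Fin n) → ℝ)
    (hV : ∀ x, V x = σ k (γ x - γ 0) + ε * ‖x‖ ^ 2) :
    ∀ x G, HasGradientAt V G x →
      ‖G‖ ≤ 2 * ε * ‖x‖ + ∑ i ∈ Finset.range k, (∏ j ∈ Finset.Ico (i + 1) k, v j) * ‖w i‖ := by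
  intro x G hG
  lift v to ℕ → ℝ≥0 using fun j => (hv j).le
  have hlip : LipschitzWith (icnnLipConst v w k) fun y => σ k (z k y - z k 0) := by
    simpa [Function.comp_def] using
      (hσ k).comp ((icnn_layer_lipschitzWith hσ hz1 hzs k hk le_rfl).sub (LipschitzWith.const _))
  have hV' : V = fun y => σ k (z k y - z k 0) + ε * ‖y‖ ^ 2 := funext fun y => by rw [hV, hγ, hγ]
  rw [hV'] at hG
  simpa [icnnLipConst] using norm_le_of_hasGradientAt_add_mul_norm_sq hlip hε.le hG
end

section
/- Let V be C¹ and positive definite, and suppose ⟨∇V(x), f(x) + g(x)α(x)⟩ ≤ −‖h(x)‖² − (4/γ²)‖(∇V(x))ᵀ g_d(x)‖² for all x. Then along any solution of ẋ = f(x) + g(x)α(x) + g_d(x)d(t) with x(0) = 0 and output z = h(x), the L₂-gain bound ∫₀^T ‖z(t)‖² dt ≤ γ² ∫₀^T ‖d(t)‖² dt holds for all T ≥ 0. -/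
/-!
Along a trajectory, `t ↦ V (x t)` is a storage function: by the chain rule and Young's inequality
`⟪∇V, g_d d⟫ ≤ (4/γ²)‖g_dᵀ ∇V‖² + γ²‖d‖²`, the dissipation hypothesis gives
`d/dt V(x t) ≤ γ²‖d t‖² - ‖h (x t)‖²`. Integrating from `0` to `T` and using `V (x 0) = 0 ≤ V (x T)`
yields the gain bound.
-/

open scoped RealInnerProductSpace

section InnerProduct

variable {E F : Type*} [NormedAddCommGroup E] [InnerProductSpace ℝ E]
  [NormedAddCommGroup F] [InnerProductSpace ℝ F]

lemma two_mul_real_inner_le_add_mul_sq {ε : ℝ} (hε : 0 < ε) (u v : E) :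
    2 * ⟪u, v⟫ ≤ ε * ‖u‖ ^ 2 + ε⁻¹ * ‖v‖ ^ 2 :=
  calc 2 * ⟪u, v⟫ ≤ 2 * ‖u‖ * ‖v‖ := by
        rw [mul_assoc]; gcongr; exact real_inner_le_norm u v
    _ ≤ ε * ‖u‖ ^ 2 + ε⁻¹ * ‖v‖ ^ 2 := two_mul_le_add_mul_sq hε

variable [CompleteSpace E] [CompleteSpace F]

lemma real_inner_add_apply_le_of_le {a b : E} {B : F →L[ℝ] E} {r γ : ℝ} (hγ : 0 < γ)
    (hab : ⟪a, b⟫ ≤ -r - (4 / γ ^ 2) * ‖ContinuousLinearMap.adjoint B a‖ ^ 2) (w : F) :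
    ⟪a, b + B w⟫ ≤ γ ^ 2 * ‖w‖ ^ 2 - r := by
  -- `ε = 8 / γ²` makes the adjoint term of Young's inequality match the one in `hab`.
  have hε : (0 : ℝ) < 8 / γ ^ 2 := by positivity
  have hyoung := two_mul_real_inner_le_add_mul_sq hε (ContinuousLinearMap.adjoint B a) w
  rw [ContinuousLinearMap.adjoint_inner_left, inv_div] at hyoung
  have hslack : γ ^ 2 / 8 * ‖w‖ ^ 2 ≤ 2 * (γ ^ 2 * ‖w‖ ^ 2) := by
    rw [← mul_assoc]; gcongr; linarith [sq_nonneg γ]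
  rw [inner_add_right]
  linarith [show 8 / γ ^ 2 * ‖ContinuousLinearMap.adjoint B a‖ ^ 2
    = 2 * (4 / γ ^ 2 * ‖ContinuousLinearMap.adjoint B a‖ ^ 2) by ring]

end InnerProduct

lemma integral_sq_norm_le_of_hasDerivAt_le {E F : Type*} [NormedAddCommGroup E]
    [NormedAddCommGroup F] {W W' : ℝ → ℝ} {z : ℝ → E} {d : ℝ → F} {γ T : ℝ} (hT : 0 ≤ T)
    (hW : ∀ t, HasDerivAt W (W' t) t) (hWT : W 0 ≤ W T) (hz : Continuous z) (hd : Continuous d)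
    (hW' : ∀ t, W' t ≤ γ ^ 2 * ‖d t‖ ^ 2 - ‖z t‖ ^ 2) :
    ∫ t in (0 : ℝ)..T, ‖z t‖ ^ 2 ≤ γ ^ 2 * ∫ t in (0 : ℝ)..T, ‖d t‖ ^ 2 := by
  have hzint : IntervalIntegrable (fun t => ‖z t‖ ^ 2) MeasureTheory.volume 0 T := by
    apply Continuous.intervalIntegrable; fun_prop
  have hdint : IntervalIntegrable (fun t => γ ^ 2 * ‖d t‖ ^ 2) MeasureTheory.volume 0 T := by
    apply Continuous.intervalIntegrable; fun_prop
  have hstorage : W T - W 0 ≤ ∫ t in (0 : ℝ)..T, (γ ^ 2 * ‖d t‖ ^ 2 - ‖z t‖ ^ 2) :=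
    intervalIntegral.sub_le_integral_of_hasDeriv_right_of_le hT
      (fun t _ => (hW t).continuousAt.continuousWithinAt) (fun t _ => (hW t).hasDerivWithinAt)
      (by apply Continuous.integrableOn_Icc; fun_prop)
      (fun t _ => hW' t)
  rw [intervalIntegral.integral_sub hdint hzint, intervalIntegral.integral_const_mul] at hstorage
  linarith

theorem L2_gain_bound_general {n m p q : ℕ}
    (V : EuclideanSpace ℝ (Fin n) → ℝ) (hV : ContDiff ℝ 1 V)
    (hV0 : V 0 = 0) (hVnonneg : ∀ x, 0 ≤ V x)
    (f : EuclideanSpace ℝ (Fin n) → EuclideanSpace ℝ (Fin n))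
    (g : EuclideanSpace ℝ (Fin n) → EuclideanSpace ℝ (Fin m) →L[ℝ] EuclideanSpace ℝ (Fin n))
    (g_d : EuclideanSpace ℝ (Fin n) → EuclideanSpace ℝ (Fin p) →L[ℝ] EuclideanSpace ℝ (Fin n))
    (h : EuclideanSpace ℝ (Fin n) → EuclideanSpace ℝ (Fin q))
    (α : EuclideanSpace ℝ (Fin n) → EuclideanSpace ℝ (Fin m))
    (hh : Continuous h)
    (γ : ℝ) (hγ : 0 < γ)
    (hdiss : ∀ x, ⟪gradient V x, f x + g x (α x)⟫ ≤
      -‖h x‖ ^ 2 - (4 / γ ^ 2) * ‖ContinuousLinearMap.adjoint (g_d x) (gradient V x)‖ ^ 2)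
    (x : ℝ → EuclideanSpace ℝ (Fin n)) (d : ℝ → EuclideanSpace ℝ (Fin p))
    (hd : Continuous d)
    (hx : ∀ t, HasDerivAt x (f (x t) + g (x t) (α (x t)) + g_d (x t) (d t)) t)
    (hx0 : x 0 = 0) :
    ∀ T, 0 ≤ T →
      (∫ t in (0 : ℝ)..T, ‖h (x t)‖ ^ 2) ≤ γ ^ 2 * ∫ t in (0 : ℝ)..T, ‖d t‖ ^ 2 := by
  intro T hT
  have hxc : Continuous x := continuous_iff_continuousAt.2 fun t => (hx t).continuousAt
  have hVx : ∀ t, HasDerivAt (fun s => V (x s))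
      ⟪gradient V (x t), f (x t) + g (x t) (α (x t)) + g_d (x t) (d t)⟫ t := fun t => by
    rw [inner_gradient_left]
    exact ((hV.differentiable one_ne_zero) (x t)).hasFDerivAt.comp_hasDerivAt t (hx t)
  refine integral_sq_norm_le_of_hasDerivAt_le hT hVx ?_ (hh.comp hxc) hd
    fun t => real_inner_add_apply_le_of_le hγ (hdiss (x t)) (d t)
  simpa only [hx0, hV0] using hVnonneg (x T)

theorem L2_gain_bound {n m p q : ℕ}
    (V : EuclideanSpace ℝ (Fin n) → ℝ) (hV : ContDiff ℝ 1 V)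
    (hV0 : V 0 = 0) (hVnonneg : ∀ x, 0 ≤ V x) (hVpos : ∀ x, x ≠ 0 → 0 < V x)
    (f : EuclideanSpace ℝ (Fin n) → EuclideanSpace ℝ (Fin n))
    (g : EuclideanSpace ℝ (Fin n) → EuclideanSpace ℝ (Fin m) →L[ℝ] EuclideanSpace ℝ (Fin n))
    (g_d : EuclideanSpace ℝ (Fin n) → EuclideanSpace ℝ (Fin p) →L[ℝ] EuclideanSpace ℝ (Fin n))
    (h : EuclideanSpace ℝ (Fin n) → EuclideanSpace ℝ (Fin q))
    (α : EuclideanSpace ℝ (Fin n) → EuclideanSpace ℝ (Fin m))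
    (hf : Continuous f) (hg : Continuous g) (hgd : Continuous g_d)
    (hh : Continuous h) (hh0 : h 0 = 0) (hα : Continuous α)
    (γ : ℝ) (hγ : 0 < γ)
    (hdiss : ∀ x, ⟪gradient V x, f x + g x (α x)⟫ ≤
      -‖h x‖ ^ 2 - (4 / γ ^ 2) * ‖ContinuousLinearMap.adjoint (g_d x) (gradient V x)‖ ^ 2)
    (x : ℝ → EuclideanSpace ℝ (Fin n)) (d : ℝ → EuclideanSpace ℝ (Fin p))
    (hd : Continuous d)
    (hx : ∀ t, HasDerivAt x (f (x t) + g (x t) (α (x t)) + g_d (x t) (d t)) t)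
    (hx0 : x 0 = 0) :
    ∀ T, 0 ≤ T →
      (∫ t in (0 : ℝ)..T, ‖h (x t)‖ ^ 2) ≤ γ ^ 2 * ∫ t in (0 : ℝ)..T, ‖d t‖ ^ 2 :=
  L2_gain_bound_general V hV hV0 hVnonneg f g g_d h α hh γ hγ hdiss x d hd hx hx0
end

section
/- Suppose V is a control Lyapunov function satisfying the small-control-type implication: for all x ≠ 0, L_gV(x) = 0 implies L_fV(x) < 0. Then Sontag's controller α_s yields L_{f + gα_s}V(x) < 0 for all x ≠ 0. -/
open scoped RealInnerProductSpace

theorem sontag_controller_decreases_CLF {n m : ℕ}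
    (V : EuclideanSpace ℝ (Fin n) → ℝ) (hV : ContDiff ℝ 1 V)
    (hV0 : V 0 = 0) (hVpos : ∀ x, x ≠ 0 → 0 < V x)
    (f : EuclideanSpace ℝ (Fin n) → EuclideanSpace ℝ (Fin n))
    (g : EuclideanSpace ℝ (Fin n) → EuclideanSpace ℝ (Fin m) →L[ℝ] EuclideanSpace ℝ (Fin n))
    (hf : Continuous f) (hg : Continuous g)
    (LfV : EuclideanSpace ℝ (Fin n) → ℝ)
    (hLfV : ∀ x, LfV x = ⟪gradient V x, f x⟫)
    (LgV : EuclideanSpace ℝ (Fin n) → EuclideanSpace ℝ (Fin m))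
    (hLgV : ∀ x, LgV x = ContinuousLinearMap.adjoint (g x) (gradient V x))
    (hclf : ∀ x, x ≠ 0 → LgV x = 0 → LfV x < 0)
    (αs : EuclideanSpace ℝ (Fin n) → EuclideanSpace ℝ (Fin m))
    (hαs0 : ∀ x, LgV x = 0 → αs x = 0)
    (hαs : ∀ x, LgV x ≠ 0 →
      αs x = -((LfV x + Real.sqrt ((LfV x) ^ 2 + ‖LgV x‖ ^ 4)) / ‖LgV x‖ ^ 2) • LgV x) :
    ∀ x, x ≠ 0 → ⟪gradient V x, f x + g x (αs x)⟫ < 0 := by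
  intro x hx
  have hsplit : ⟪gradient V x, f x + g x (αs x)⟫
      = LfV x + ⟪LgV x, αs x⟫ := by
    rw [inner_add_right, hLfV, hLgV, ContinuousLinearMap.adjoint_inner_left]
  rw [hsplit]
  by_cases h : LgV x = 0
  · rw [hαs0 x h, inner_zero_right, add_zero]
    exact hclf x hx h
  · have hgt : (0:ℝ) < ‖LgV x‖ := norm_pos_iff.mpr h
    have hn : (0:ℝ) < ‖LgV x‖ ^ 2 := by positivity
    rw [hαs x h, inner_smul_right, real_inner_self_eq_norm_sq]
    have : -((LfV x + Real.sqrt (LfV x ^ 2 + ‖LgV x‖ ^ 4)) / ‖LgV x‖ ^ 2) * ‖LgV x‖ ^ 2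
        = -(LfV x + Real.sqrt (LfV x ^ 2 + ‖LgV x‖ ^ 4)) := by
      field_simp
    rw [this]
    have hsq : 0 < Real.sqrt (LfV x ^ 2 + ‖LgV x‖ ^ 4) := by
      apply Real.sqrt_pos.mpr; positivity
    linarith
end
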